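/- arXiv:1112.1147 — 10 statements merged into one kernel-verified Lean document; each statement's English description precedes it below -/
import Mathlib

section
/- Let δ ∈ (0,1), let A, P, A', P' be real numbers with A, A' ∈ [0,1], and let x be an integer with x > (3−δ)/(2δ). Suppose that for all integers θ ∈ [(1−δ)x, (1+δ)x], A·θ − P ≥ A'·θ − P', and for all integers θ' ∈ [(1−δ)(x+1), (1+δ)(x+1)], A'·θ' − P' ≥ A·θ' − P. Then A = A'. -/
theorem stmt1 (δ : ℝ) (hδ : δ ∈ Set.Ioo (0:ℝ) 1) (A P A' P' : ℝ)
    (hA : A ∈ Set.Icc (0:ℝ) 1) (hA' : A' ∈ Set.Icc (0:ℝ) 1)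
    (x : ℤ) (hx : (x : ℝ) > (3 - δ) / (2 * δ))
    (h1 : ∀ θ : ℤ, (1 - δ) * (x : ℝ) ≤ (θ : ℝ) → (θ : ℝ) ≤ (1 + δ) * (x : ℝ) →
      A * θ - P ≥ A' * θ - P')
    (h2 : ∀ θ' : ℤ, (1 - δ) * ((x : ℝ) + 1) ≤ (θ' : ℝ) → (θ' : ℝ) ≤ (1 + δ) * ((x : ℝ) + 1) →
      A' * θ' - P' ≥ A * θ' - P) :
    A = A' := by
  obtain ⟨hδ0, hδ1⟩ := hδ
  have hxd : 2 * δ * (x : ℝ) > 3 - δ := by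
    have := (div_lt_iff₀ (by positivity : (0:ℝ) < 2 * δ)).mp hx
    linarith
  set θ : ℤ := ⌈(1 - δ) * ((x : ℝ) + 1)⌉ with hθ
  have hc1 : (1 - δ) * ((x : ℝ) + 1) ≤ (θ : ℝ) := Int.le_ceil _
  have hc2 : (θ : ℝ) < (1 - δ) * ((x : ℝ) + 1) + 1 := Int.ceil_lt_add_one _
  have hθub : (θ : ℝ) + 1 ≤ (1 + δ) * (x : ℝ) := by nlinarith
  have hθlb : (1 - δ) * (x : ℝ) ≤ (θ : ℝ) := by nlinarith
  have hθub' : (θ : ℝ) + 1 ≤ (1 + δ) * ((x : ℝ) + 1) := by nlinarith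
  have e1 := h1 θ hθlb (by linarith)
  have e1' := h1 (θ + 1) (by push_cast; linarith) (by push_cast; linarith)
  have e2 := h2 θ hc1 (by linarith)
  have e2' := h2 (θ + 1) (by push_cast; linarith) (by push_cast; linarith)
  push_cast at e1' e2'
  nlinarith [e1, e1', e2, e2']
end

section
/- Let δ ∈ (0,1), D = ((1+δ)/(1−δ))² − 1, n ≥ 1, and let z_1 ≥ z_2 ≥ ... ≥ z_n ≥ 0 be reals with z_1 > 0. Then there exists an index n* ∈ {1,...,n} such that z_i > (Σ_{j=1}^{n*} z_j)/(n* + D) for all i ≤ n*, and z_i ≤ (Σ_{j=1}^{n*} z_j)/(n* + D) for all i > n*. -/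
/-!
Let `t m = (z 1 + ⋯ + z m) / (m + D)`. Take `n*` to be the largest `m ≤ n` with `z m > t m`; it
exists because `z 1 > z 1 / (1 + D)`. Since `z` is non-increasing, `z i > t n*` for `i ≤ n*`.
For `i > n*`, maximality gives `z (n* + 1) ≤ t (n* + 1)`, and clearing denominators shows
this is equivalent to `z (n* + 1) ≤ t n*`.
-/

open Finset

noncomputable def bidThreshold (z : ℕ → ℝ) (D : ℝ) (m : ℕ) : ℝ :=
  (∑ j ∈ Icc 1 m, z j) / ((m : ℝ) + D)

lemma le_add_div_add_one_iff {x s c : ℝ} (hc : 0 < c) :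
    x ≤ (s + x) / (c + 1) ↔ x ≤ s / c := by
  rw [le_div_iff₀ (by linarith), le_div_iff₀ hc]
  constructor <;> intro h <;> linarith

lemma le_bidThreshold_succ_iff (z : ℕ → ℝ) {D : ℝ} (hD : 0 < D) (m : ℕ) :
    z (m + 1) ≤ bidThreshold z D (m + 1) ↔ z (m + 1) ≤ bidThreshold z D m := by
  have hmD : 0 < (m : ℝ) + D := by positivity
  unfold bidThreshold
  rw [sum_Icc_succ_top (by omega), Nat.cast_succ, add_right_comm]
  exact le_add_div_add_one_iff hmD

lemma bidThreshold_one_lt (z : ℕ → ℝ) {D : ℝ} (hD : 0 < D) (hz : 0 < z 1) :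
    bidThreshold z D 1 < z 1 := by
  simp only [bidThreshold, Icc_self, sum_singleton, Nat.cast_one]
  rw [div_lt_iff₀ (by linarith)]
  nlinarith

lemma one_add_div_one_sub_sq_sub_one_pos {δ : ℝ} (hδ : δ ∈ Set.Ioo (0 : ℝ) 1) :
    0 < ((1 + δ) / (1 - δ)) ^ 2 - 1 := by
  obtain ⟨hδ0, hδ1⟩ := hδ
  have hratio : 1 < (1 + δ) / (1 - δ) := by rw [lt_div_iff₀ (by linarith)]; linarith
  nlinarith

theorem exists_bidThreshold_index {D : ℝ} (hD : 0 < D) {n : ℕ} (hn : 1 ≤ n) {z : ℕ → ℝ}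
    (hsort : ∀ i j, 1 ≤ i → i ≤ j → j ≤ n → z j ≤ z i) (hpos : 0 < z 1) :
    ∃ m, 1 ≤ m ∧ m ≤ n ∧
      (∀ i, 1 ≤ i → i ≤ m → bidThreshold z D m < z i) ∧
      (∀ i, m < i → i ≤ n → z i ≤ bidThreshold z D m) := by
  let IsWinner m := bidThreshold z D m < z m
  have hwin₁ : IsWinner 1 := bidThreshold_one_lt z hD hpos
  set m := Nat.findGreatest IsWinner n
  have hm₁ : 1 ≤ m := Nat.le_findGreatest hn hwin₁
  have hmn : m ≤ n := Nat.findGreatest_le n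
  have hwin : IsWinner m := Nat.findGreatest_spec hn hwin₁
  refine ⟨m, hm₁, hmn, fun i hi him => hwin.trans_le (hsort i m hi him hmn), ?_⟩
  intro i hmi hin
  have hlose : ¬IsWinner (m + 1) := Nat.findGreatest_is_greatest (Nat.lt_succ_self m) (by omega)
  calc z i ≤ z (m + 1) := hsort (m + 1) i (by omega) hmi hin
    _ ≤ bidThreshold z D m := (le_bidThreshold_succ_iff z hD m).mp (not_lt.mp hlose)

theorem stmt4_general (δ : ℝ) (hδ : δ ∈ Set.Ioo (0:ℝ) 1) (n : ℕ) (hn : 1 ≤ n)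
    (z : ℕ → ℝ)
    (hsort : ∀ i j, 1 ≤ i → i ≤ j → j ≤ n → z j ≤ z i)
    (hpos : 0 < z 1) :
    ∃ m, 1 ≤ m ∧ m ≤ n ∧
      (∀ i, 1 ≤ i → i ≤ m →
        z i > (∑ j ∈ Finset.Icc 1 m, z j) / ((m : ℝ) + (((1 + δ) / (1 - δ)) ^ 2 - 1))) ∧
      (∀ i, m < i → i ≤ n →
        z i ≤ (∑ j ∈ Finset.Icc 1 m, z j) / ((m : ℝ) + (((1 + δ) / (1 - δ)) ^ 2 - 1))) :=
  exists_bidThreshold_index (one_add_div_one_sub_sq_sub_one_pos hδ) hn hsort hpos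

theorem stmt4 (δ : ℝ) (hδ : δ ∈ Set.Ioo (0:ℝ) 1) (n : ℕ) (hn : 1 ≤ n)
    (z : ℕ → ℝ)
    (hsort : ∀ i j, 1 ≤ i → i ≤ j → j ≤ n → z j ≤ z i)
    (hnn : ∀ i, 1 ≤ i → i ≤ n → 0 ≤ z i)
    (hpos : 0 < z 1) :
    ∃ m, 1 ≤ m ∧ m ≤ n ∧
      (∀ i, 1 ≤ i → i ≤ m →
        z i > (∑ j ∈ Finset.Icc 1 m, z j) / ((m : ℝ) + (((1 + δ) / (1 - δ)) ^ 2 - 1))) ∧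
      (∀ i, m < i → i ≤ n →
        z i ≤ (∑ j ∈ Finset.Icc 1 m, z j) / ((m : ℝ) + (((1 + δ) / (1 - δ)) ^ 2 - 1))) :=
  stmt4_general δ hδ n hn z hsort hpos
end

section
/- Let D > 0, n ≥ 1, and z_1 ≥ z_2 ≥ ... ≥ z_n ≥ 0. If n⊥ and n⊤ in {1,...,n} both satisfy the threshold condition (z_i > (Σ_{j≤m} z_j)/(m+D) for all i ≤ m and z_i ≤ (Σ_{j≤m} z_j)/(m+D) for all i > m, with m = n⊥ resp. m = n⊤), then n⊥ = n⊤. -/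
/-!
Write `T m = (z₁ + ⋯ + z_m) / (m + D)`. If `m₁ < m₂` were both threshold indices, then the entry
`z_{m₁+1}` would be at most `T m₁` (it lies past `m₁`) and strictly above `T m₂` (it lies within
`m₂`), so `T m₂ < T m₁`. On the other hand all of `z_{m₁+1}, …, z_{m₂}` exceed `T m₂`, and
averaging them into `T m₂ (m₂ + D) = T m₁ (m₁ + D) + z_{m₁+1} + ⋯ + z_{m₂}` gives `T m₁ < T m₂`.
-/

open Finset

noncomputable def threshold (z : ℕ → ℝ) (D : ℝ) (m : ℕ) : ℝ :=
  (∑ j ∈ Icc 1 m, z j) / ((m : ℝ) + D)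

theorem threshold_lt_threshold_of_lt {z : ℕ → ℝ} {D : ℝ} {m₁ m₂ : ℕ}
    (hD : 0 < (m₁ : ℝ) + D) (h : m₁ < m₂)
    (hwin : ∀ i, m₁ < i → i ≤ m₂ → threshold z D m₂ < z i) :
    threshold z D m₁ < threshold z D m₂ := by
  set T := threshold z D m₂
  have hD₂ : 0 < (m₂ : ℝ) + D := by
    have : (m₁ : ℝ) < m₂ := by exact_mod_cast h
    linarith
  have hsplit : ∑ j ∈ Icc 1 m₂, z j = ∑ j ∈ Icc 1 m₁, z j + ∑ j ∈ Ioc m₁ m₂, z j := by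
    rw [show Icc 1 m₂ = Ioc 0 m₂ from Icc_add_one_left_eq_Ioc 0 m₂,
      show Icc 1 m₁ = Ioc 0 m₁ from Icc_add_one_left_eq_Ioc 0 m₁]
    exact (sum_Ioc_consecutive z (Nat.zero_le m₁) h.le).symm
  have hcard : ((Ioc m₁ m₂).card : ℝ) = m₂ - m₁ := by
    rw [Nat.card_Ioc, Nat.cast_sub h.le]
  have havg : ((m₂ : ℝ) - m₁) * T < ∑ j ∈ Ioc m₁ m₂, z j := by
    have := sum_lt_sum_of_nonempty (nonempty_Ioc.mpr h) fun i hi => hwin i (mem_Ioc.mp hi).1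
      (mem_Ioc.mp hi).2
    rwa [sum_const, nsmul_eq_mul, hcard] at this
  have hT : T * ((m₂ : ℝ) + D) = ∑ j ∈ Icc 1 m₂, z j := div_mul_cancel₀ _ hD₂.ne'
  rw [threshold, div_lt_iff₀ hD]
  linarith

theorem le_of_le_threshold_of_threshold_lt {z : ℕ → ℝ} {D : ℝ} {n m₁ m₂ : ℕ} (hD : 0 < D)
    (hm₂n : m₂ ≤ n) (hlose₁ : ∀ i, m₁ < i → i ≤ n → z i ≤ threshold z D m₁)
    (hwin₂ : ∀ i, 1 ≤ i → i ≤ m₂ → z i > threshold z D m₂) :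
    m₂ ≤ m₁ := by
  by_contra! h
  have hT : threshold z D m₁ < threshold z D m₂ :=
    threshold_lt_threshold_of_lt (by positivity) h fun i hi hi₂ => hwin₂ i (by omega) hi₂
  have hz_lt : threshold z D m₂ < z (m₁ + 1) := hwin₂ (m₁ + 1) (by omega) h
  have hz_le : z (m₁ + 1) ≤ threshold z D m₁ := hlose₁ (m₁ + 1) (by omega) (by omega)
  linarith

theorem stmt5_general (D : ℝ) (hD : 0 < D) (n : ℕ)
    (z : ℕ → ℝ)
    (m₁ m₂ : ℕ) (hm₁n : m₁ ≤ n) (hm₂n : m₂ ≤ n)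
    (hwin₁ : ∀ i, 1 ≤ i → i ≤ m₁ → z i > (∑ j ∈ Finset.Icc 1 m₁, z j) / ((m₁ : ℝ) + D))
    (hlose₁ : ∀ i, m₁ < i → i ≤ n → z i ≤ (∑ j ∈ Finset.Icc 1 m₁, z j) / ((m₁ : ℝ) + D))
    (hwin₂ : ∀ i, 1 ≤ i → i ≤ m₂ → z i > (∑ j ∈ Finset.Icc 1 m₂, z j) / ((m₂ : ℝ) + D))
    (hlose₂ : ∀ i, m₂ < i → i ≤ n → z i ≤ (∑ j ∈ Finset.Icc 1 m₂, z j) / ((m₂ : ℝ) + D)) :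
    m₁ = m₂ :=
  le_antisymm (le_of_le_threshold_of_threshold_lt hD hm₁n hlose₂ hwin₁)
    (le_of_le_threshold_of_threshold_lt hD hm₂n hlose₁ hwin₂)

theorem stmt5 (D : ℝ) (hD : 0 < D) (n : ℕ) (hn : 1 ≤ n)
    (z : ℕ → ℝ)
    (hsort : ∀ i j, 1 ≤ i → i ≤ j → j ≤ n → z j ≤ z i)
    (hnn : ∀ i, 1 ≤ i → i ≤ n → 0 ≤ z i)
    (m₁ m₂ : ℕ) (hm₁ : 1 ≤ m₁) (hm₁n : m₁ ≤ n) (hm₂ : 1 ≤ m₂) (hm₂n : m₂ ≤ n)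
    (hwin₁ : ∀ i, 1 ≤ i → i ≤ m₁ → z i > (∑ j ∈ Finset.Icc 1 m₁, z j) / ((m₁ : ℝ) + D))
    (hlose₁ : ∀ i, m₁ < i → i ≤ n → z i ≤ (∑ j ∈ Finset.Icc 1 m₁, z j) / ((m₁ : ℝ) + D))
    (hwin₂ : ∀ i, 1 ≤ i → i ≤ m₂ → z i > (∑ j ∈ Finset.Icc 1 m₂, z j) / ((m₂ : ℝ) + D))
    (hlose₂ : ∀ i, m₂ < i → i ≤ n → z i ≤ (∑ j ∈ Finset.Icc 1 m₂, z j) / ((m₂ : ℝ) + D)) :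
    m₁ = m₂ :=
  stmt5_general D hD n z m₁ m₂ hm₁n hm₂n hwin₁ hlose₁ hwin₂ hlose₂
end

section
/- Let D > 0, n ≥ 1, z_1 ≥ ... ≥ z_n ≥ 0 with z_1 > 0, and let n* be the threshold index, i.e., z_i > S/(n*+D) for i ≤ n* and z_i ≤ S/(n*+D) for i > n*, where S = Σ_{j=1}^{n*} z_j. Define f_i(z) = (1/n)·((n+D)/(n*+D))·(z_i(n*+D) − S)/(z_i·D) for i ≤ n* and f_i(z) = 0 for i > n*. Then f_i(z) ≥ 0 for all i and Σ_{i=1}^n f_i(z) ≤ 1. -/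
/-! Summing the shares of the winners `i ≤ m`, each equal to `(1/n)·((n+D)/(m+D))·((m+D) − S/z_i)/D`,
the AM–HM inequality `(∑ 1/z_i)·S ≥ m²` bounds the total by `(1/n)·((n+D)/(m+D))·m`, which is at most
`1` exactly because `m ≤ n`. The winners' bids are positive because `S ≥ 0`, which follows by summing
the winning conditions `z_i > S/(m+D)`. -/

open Finset

section Winners

variable {ι : Type*} (s : Finset ι) (z : ι → ℝ) {D : ℝ}

theorem sq_card_le_sum_mul_sum_inv (hz : ∀ i ∈ s, 0 < z i) :
    (#s : ℝ) ^ 2 ≤ (∑ i ∈ s, z i) * ∑ i ∈ s, (z i)⁻¹ := by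
  simpa using sum_sq_le_sum_mul_sum_of_sq_le_mul s (r := fun _ => (1 : ℝ))
    (fun i hi => (hz i hi).le) (fun i hi => (inv_pos.2 (hz i hi)).le)
    (fun i hi => by rw [mul_inv_cancel₀ (hz i hi).ne', one_pow])

theorem pos_of_sum_div_card_add_lt (hD : 0 < D)
    (hwin : ∀ i ∈ s, (∑ j ∈ s, z j) / (#s + D) < z i) : ∀ i ∈ s, 0 < z i := by
  have hc : (0 : ℝ) < #s + D := by positivity
  have hS : 0 ≤ ∑ j ∈ s, z j := by
    have hsum : #s * ((∑ j ∈ s, z j) / (#s + D)) ≤ ∑ j ∈ s, z j := by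
      simpa using sum_le_sum fun i hi => (hwin i hi).le
    rw [mul_div_assoc', div_le_iff₀ hc] at hsum
    nlinarith
  exact fun i hi => (div_nonneg hS hc.le).trans_lt (hwin i hi)

theorem sum_sub_div_mul_le_card (hD : 0 < D) (hz : ∀ i ∈ s, 0 < z i) :
    ∑ i ∈ s, (z i * (#s + D) - ∑ j ∈ s, z j) / (z i * D) ≤ #s := by
  have hterm : ∀ i ∈ s, (z i * (#s + D) - ∑ j ∈ s, z j) / (z i * D)
      = ((#s + D) - (∑ j ∈ s, z j) * (z i)⁻¹) / D := by
    intro i hi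
    have := (hz i hi).ne'
    field_simp
  have hAMHM := sq_card_le_sum_mul_sum_inv s z hz
  rw [sum_congr rfl hterm, ← sum_div, sum_sub_distrib, sum_const, ← mul_sum, nsmul_eq_mul,
    div_le_iff₀ hD]
  nlinarith

end Winners

theorem one_div_mul_add_div_add_mul_le_one {m n D : ℝ} (hD : 0 ≤ D) (hm : 0 ≤ m) (hmn : m ≤ n) :
    1 / n * ((n + D) / (m + D)) * m ≤ 1 := by
  rw [show 1 / n * ((n + D) / (m + D)) * m = m * (n + D) / (n * (m + D)) by
    simp only [div_eq_mul_inv, mul_inv]; ring]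
  exact div_le_one_of_le₀ (by nlinarith) (mul_nonneg (hm.trans hmn) (add_nonneg hm hD))

theorem stmt6_general (D : ℝ) (hD : 0 < D) (n : ℕ)
    (z : ℕ → ℝ)
    (m : ℕ) (hmn : m ≤ n)
    (hwin : ∀ i, 1 ≤ i → i ≤ m → z i > (∑ j ∈ Finset.Icc 1 m, z j) / ((m : ℝ) + D)) :
    (∀ i, 1 ≤ i → i ≤ n →
      0 ≤ (if i ≤ m then
        (1 / (n : ℝ)) * (((n : ℝ) + D) / ((m : ℝ) + D)) *
          ((z i * ((m : ℝ) + D) - ∑ j ∈ Finset.Icc 1 m, z j) / (z i * D))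
      else 0)) ∧
    (∑ i ∈ Finset.Icc 1 n,
      (if i ≤ m then
        (1 / (n : ℝ)) * (((n : ℝ) + D) / ((m : ℝ) + D)) *
          ((z i * ((m : ℝ) + D) - ∑ j ∈ Finset.Icc 1 m, z j) / (z i * D))
      else 0)) ≤ 1 := by
  have hwin' : ∀ i ∈ Icc 1 m, (∑ j ∈ Icc 1 m, z j) / (#(Icc 1 m) + D) < z i := fun i hi => by
    simpa using hwin i (mem_Icc.1 hi).1 (mem_Icc.1 hi).2
  have hz := pos_of_sum_div_card_add_lt _ z hD hwin'
  constructor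
  · intro i hi _
    split_ifs with him
    · have hi' : i ∈ Icc 1 m := mem_Icc.2 ⟨hi, him⟩
      have hnum := (div_lt_iff₀ (by positivity)).1 (hwin i hi him)
      have := hz i hi'
      exact mul_nonneg (by positivity) (div_nonneg (by linarith) (by positivity))
    · exact le_rfl
  · have hfilter : (Icc 1 n).filter (· ≤ m) = Icc 1 m := by
      ext i; simp only [mem_filter, mem_Icc]; omega
    rw [← sum_filter, hfilter, ← mul_sum]
    calc _ ≤ 1 / (n : ℝ) * (((n : ℝ) + D) / ((m : ℝ) + D)) * m :=
          mul_le_mul_of_nonneg_left (by simpa using sum_sub_div_mul_le_card _ z hD hz)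
            (by positivity)
      _ ≤ 1 := one_div_mul_add_div_add_mul_le_one hD.le m.cast_nonneg (by exact_mod_cast hmn)

theorem stmt6 (D : ℝ) (hD : 0 < D) (n : ℕ) (hn : 1 ≤ n)
    (z : ℕ → ℝ)
    (hsort : ∀ i j, 1 ≤ i → i ≤ j → j ≤ n → z j ≤ z i)
    (hnn : ∀ i, 1 ≤ i → i ≤ n → 0 ≤ z i)
    (hpos : 0 < z 1)
    (m : ℕ) (hm1 : 1 ≤ m) (hmn : m ≤ n)
    (hwin : ∀ i, 1 ≤ i → i ≤ m → z i > (∑ j ∈ Finset.Icc 1 m, z j) / ((m : ℝ) + D))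
    (hlose : ∀ i, m < i → i ≤ n → z i ≤ (∑ j ∈ Finset.Icc 1 m, z j) / ((m : ℝ) + D)) :
    (∀ i, 1 ≤ i → i ≤ n →
      0 ≤ (if i ≤ m then
        (1 / (n : ℝ)) * (((n : ℝ) + D) / ((m : ℝ) + D)) *
          ((z i * ((m : ℝ) + D) - ∑ j ∈ Finset.Icc 1 m, z j) / (z i * D))
      else 0)) ∧
    (∑ i ∈ Finset.Icc 1 n,
      (if i ≤ m then
        (1 / (n : ℝ)) * (((n : ℝ) + D) / ((m : ℝ) + D)) *
          ((z i * ((m : ℝ) + D) - ∑ j ∈ Finset.Icc 1 m, z j) / (z i * D))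
      else 0)) ≤ 1 :=
  stmt6_general D hD n z m hmn hwin
end

section
/- Let D > 0, n ≥ 1, z_1 ≥ ... ≥ z_n ≥ 0 with z_1 > 0, and let n*, S, f_i be the threshold index, winner-bid sum, and allocation probabilities of the optimal Knightian allocation function. Then for every i ∈ {1,...,n}: Σ_{j=1}^n f_j(z)·z_j + D·f_i(z)·z_i ≥ (z_i/n)·(n+D). -/
/-!
With `m` the number of winners `n*` and threshold `t = S / (m + D)`, a winner's expected payment
is `f_j z_j = (n + D) / (n D) · (z_j - t)`, so the expected revenue `Σ_j f_j z_j` is `(n + D) / n · t`.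
For a winner the inequality then holds with equality, and for a loser it reduces to `z_i ≤ t`.
-/

open Finset

noncomputable def knightianAlloc (D : ℝ) (n m : ℕ) (z : ℕ → ℝ) (j : ℕ) : ℝ :=
  if j ≤ m then
    (1 / (n : ℝ)) * (((n : ℝ) + D) / ((m : ℝ) + D)) *
      ((z j * ((m : ℝ) + D) - ∑ k ∈ Icc 1 m, z k) / (z j * D))
  else 0

section

variable {D : ℝ} {n m : ℕ} {z : ℕ → ℝ} {j : ℕ}

lemma knightianAlloc_of_lt (hj : m < j) : knightianAlloc D n m z j = 0 :=
  if_neg hj.not_ge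

lemma knightianAlloc_mul_self (hj : j ≤ m) (hz : z j ≠ 0) (hD : D ≠ 0) (hmD : (m : ℝ) + D ≠ 0) :
    knightianAlloc D n m z j * z j =
      1 / n * ((n + D) / D) * (z j - (∑ k ∈ Icc 1 m, z k) / (m + D)) := by
  rw [knightianAlloc, if_pos hj]
  field_simp

lemma sum_knightianAlloc_mul_self (hmn : m ≤ n) (hz : ∀ j, 1 ≤ j → j ≤ m → z j ≠ 0)
    (hD : D ≠ 0) (hmD : (m : ℝ) + D ≠ 0) :
    ∑ j ∈ Icc 1 n, knightianAlloc D n m z j * z j =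
      (n + D) / n * ((∑ k ∈ Icc 1 m, z k) / (m + D)) := by
  have hlosers : ∀ j ∈ Icc 1 n, j ∉ Icc 1 m → knightianAlloc D n m z j * z j = 0 :=
    fun j hj hjm => by
      rw [knightianAlloc_of_lt, zero_mul]
      by_contra! h
      exact hjm (mem_Icc.mpr ⟨(mem_Icc.mp hj).1, h⟩)
  rw [← sum_subset (Icc_subset_Icc_right hmn) hlosers,
    sum_congr rfl fun j hj => knightianAlloc_mul_self (mem_Icc.mp hj).2
      (hz j (mem_Icc.mp hj).1 (mem_Icc.mp hj).2) hD hmD,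
    ← mul_sum, sum_sub_distrib, sum_const, Nat.card_Icc, Nat.add_sub_cancel, nsmul_eq_mul]
  field_simp
  ring

end

theorem stmt8_general (D : ℝ) (hD : 0 < D) (n : ℕ)
    (z : ℕ → ℝ)
    (hnn : ∀ i, 1 ≤ i → i ≤ n → 0 ≤ z i)
    (m : ℕ) (hmn : m ≤ n)
    (hwin : ∀ i, 1 ≤ i → i ≤ m → z i > (∑ j ∈ Finset.Icc 1 m, z j) / ((m : ℝ) + D))
    (hlose : ∀ i, m < i → i ≤ n → z i ≤ (∑ j ∈ Finset.Icc 1 m, z j) / ((m : ℝ) + D)) :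
    ∀ i, 1 ≤ i → i ≤ n →
      (∑ j ∈ Finset.Icc 1 n,
        (if j ≤ m then
          (1 / (n : ℝ)) * (((n : ℝ) + D) / ((m : ℝ) + D)) *
            ((z j * ((m : ℝ) + D) - ∑ k ∈ Finset.Icc 1 m, z k) / (z j * D))
        else 0) * z j)
      + D * (if i ≤ m then
          (1 / (n : ℝ)) * (((n : ℝ) + D) / ((m : ℝ) + D)) *
            ((z i * ((m : ℝ) + D) - ∑ k ∈ Finset.Icc 1 m, z k) / (z i * D))
        else 0) * z i
      ≥ (z i / (n : ℝ)) * ((n : ℝ) + D) := by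
  intro i hi hin
  change ∑ j ∈ Icc 1 n, knightianAlloc D n m z j * z j + D * knightianAlloc D n m z i * z i ≥ _
  have hmD : (0 : ℝ) < m + D := by positivity
  have hS : 0 ≤ ∑ k ∈ Icc 1 m, z k :=
    sum_nonneg fun k hk => hnn k (mem_Icc.mp hk).1 ((mem_Icc.mp hk).2.trans hmn)
  have hz : ∀ j, 1 ≤ j → j ≤ m → z j ≠ 0 := fun j hj hjm =>
    ((div_nonneg hS hmD.le).trans_lt (hwin j hj hjm)).ne'
  rw [sum_knightianAlloc_mul_self hmn hz hD.ne' hmD.ne']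
  rcases le_or_gt i m with him | him
  · rw [mul_assoc D, knightianAlloc_mul_self him (hz i hi him) hD.ne' hmD.ne']
    refine le_of_eq ?_
    field_simp
    ring
  · rw [knightianAlloc_of_lt him, mul_zero, zero_mul, add_zero, div_mul_comm]
    gcongr
    exact hlose i him hin

theorem stmt8 (D : ℝ) (hD : 0 < D) (n : ℕ) (hn : 1 ≤ n)
    (z : ℕ → ℝ)
    (hsort : ∀ i j, 1 ≤ i → i ≤ j → j ≤ n → z j ≤ z i)
    (hnn : ∀ i, 1 ≤ i → i ≤ n → 0 ≤ z i)
    (hpos : 0 < z 1)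
    (m : ℕ) (hm1 : 1 ≤ m) (hmn : m ≤ n)
    (hwin : ∀ i, 1 ≤ i → i ≤ m → z i > (∑ j ∈ Finset.Icc 1 m, z j) / ((m : ℝ) + D))
    (hlose : ∀ i, m < i → i ≤ n → z i ≤ (∑ j ∈ Finset.Icc 1 m, z j) / ((m : ℝ) + D)) :
    ∀ i, 1 ≤ i → i ≤ n →
      (∑ j ∈ Finset.Icc 1 n,
        (if j ≤ m then
          (1 / (n : ℝ)) * (((n : ℝ) + D) / ((m : ℝ) + D)) *
            ((z j * ((m : ℝ) + D) - ∑ k ∈ Finset.Icc 1 m, z k) / (z j * D))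
        else 0) * z j)
      + D * (if i ≤ m then
          (1 / (n : ℝ)) * (((n : ℝ) + D) / ((m : ℝ) + D)) *
            ((z i * ((m : ℝ) + D) - ∑ k ∈ Finset.Icc 1 m, z k) / (z i * D))
        else 0) * z i
      ≥ (z i / (n : ℝ)) * ((n : ℝ) + D) :=
  stmt8_general D hD n z hnn m hmn hwin hlose
end

section
/- Let δ ∈ (0,1), D = ((1+δ)/(1−δ))² − 1, n ≥ 1, and let f : v ↦ (f_1(v),...,f_n(v)) be any allocation function satisfying Σ_j f_j(v)·v_j + D·f_i(v)·v_i ≥ (v_i/n)(n+D) for all i and all bid profiles v of non-negative reals. Suppose θ is a profile of non-negative reals with ((1−δ)/(1+δ))·v_j ≤ θ_j ≤ ((1+δ)/(1−δ))·v_j for all j. Then for every i: Σ_{j=1}^n θ_j·f_j(v) ≥ (((1−δ)² + 4δ/n)/(1+δ)²)·θ_i. -/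
/-!
Write `r = (1-δ)/(1+δ)`, `S = ∑ f_j v_j` and `c` for the claimed ratio; then `r²(1+D) = 1` and
`c(1+D) = 1 + D/n`, so δ-goodness reads `S + D f_i v_i ≥ c(1+D) v_i`. The welfare is at least
`r(S - f_i v_i) + θ_i f_i`, which is affine in `θ_i ∈ [r v_i, v_i/r]`. If `f_i ≥ c`, take the
lower end: goodness with `f_i v_i ≤ S` gives `S ≥ c v_i`. If `f_i < c`, take the upper end:
multiplying goodness by `r²` gives `r² S + (1 - r²) f_i v_i ≥ c v_i`.
-/

open Finset

theorem le_of_good_of_ratio_bounds {r D c S v f θ W : ℝ} (hr : 0 < r) (hD : 0 ≤ D)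
    (hrD : r ^ 2 * (1 + D) = 1) (hS : f * v ≤ S)
    (hgood : c * (1 + D) * v ≤ S + D * (f * v)) (hlo : r * v ≤ θ) (hhi : r * θ ≤ v)
    (hW : r * (S - f * v) + θ * f ≤ W) : c * θ ≤ W := by
  rcases le_or_gt c f with hcf | hfc
  · have hcS : c * v ≤ S := by
      have : D * (f * v) ≤ D * S := mul_le_mul_of_nonneg_left hS hD
      nlinarith
    nlinarith [mul_le_mul_of_nonneg_left hlo (sub_nonneg.2 hcf)]
  · have hr2 : c * v ≤ r ^ 2 * S + (1 - r ^ 2) * (f * v) := by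
      have := mul_le_mul_of_nonneg_left hgood (sq_nonneg r)
      nlinarith
    have : r * (c * θ) ≤ r * W := by
      nlinarith [mul_le_mul_of_nonneg_left hhi (sub_nonneg.2 hfc.le)]
    exact le_of_mul_le_mul_left this hr

theorem mul_sum_sub_add_le_sum {ι : Type*} [DecidableEq ι] {s : Finset ι} {v θ f : ι → ℝ}
    {r : ℝ} {i : ι} (hi : i ∈ s) (hf : ∀ j ∈ s, 0 ≤ f j) (hθ : ∀ j ∈ s, r * v j ≤ θ j) :
    r * (∑ j ∈ s, f j * v j - f i * v i) + θ i * f i ≤ ∑ j ∈ s, θ j * f j := by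
  rw [← sum_erase_add _ _ hi, ← sum_erase_add _ _ hi, add_sub_cancel_right, mul_sum]
  gcongr ?_ + _
  refine sum_le_sum fun j hj ↦ ?_
  have hj := mem_of_mem_erase hj
  linarith [mul_le_mul_of_nonneg_right (hθ j hj) (hf j hj)]

section Constants

variable {δ : ℝ}

theorem one_le_div_one_sub (hδ : δ ∈ Set.Ioo (0 : ℝ) 1) : 1 ≤ (1 + δ) / (1 - δ) := by
  rw [one_le_div₀ (by linarith [hδ.2])]
  linarith [hδ.1]

theorem div_sq_mul_one_add (hδ : δ ∈ Set.Ioo (0 : ℝ) 1) :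
    ((1 - δ) / (1 + δ)) ^ 2 * (1 + (((1 + δ) / (1 - δ)) ^ 2 - 1)) = 1 := by
  have : 1 - δ ≠ 0 := by linarith [hδ.2]
  have : 1 + δ ≠ 0 := by linarith [hδ.1]
  field_simp
  ring

theorem div_mul_div_mul (hδ : δ ∈ Set.Ioo (0 : ℝ) 1) (x : ℝ) :
    (1 - δ) / (1 + δ) * ((1 + δ) / (1 - δ) * x) = x := by
  have : 1 - δ ≠ 0 := by linarith [hδ.2]
  have : 1 + δ ≠ 0 := by linarith [hδ.1]
  field_simp

theorem welfare_ratio_mul_one_add (hδ : δ ∈ Set.Ioo (0 : ℝ) 1) {n : ℝ} (hn : n ≠ 0) (x : ℝ) :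
    ((1 - δ) ^ 2 + 4 * δ / n) / (1 + δ) ^ 2 * (1 + (((1 + δ) / (1 - δ)) ^ 2 - 1)) * x
      = x / n * (n + (((1 + δ) / (1 - δ)) ^ 2 - 1)) := by
  have : 1 - δ ≠ 0 := by linarith [hδ.2]
  have : 1 + δ ≠ 0 := by linarith [hδ.1]
  field_simp
  ring

end Constants

theorem stmt9_general (δ : ℝ) (hδ : δ ∈ Set.Ioo (0:ℝ) 1) (n : ℕ)
    (v θ f : ℕ → ℝ)
    (hvnn : ∀ j, 1 ≤ j → j ≤ n → 0 ≤ v j)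
    (hfnn : ∀ j, 1 ≤ j → j ≤ n → 0 ≤ f j)
    (hgood : ∀ i, 1 ≤ i → i ≤ n →
      (∑ j ∈ Finset.Icc 1 n, f j * v j)
        + (((1 + δ) / (1 - δ)) ^ 2 - 1) * f i * v i
      ≥ (v i / (n : ℝ)) * ((n : ℝ) + (((1 + δ) / (1 - δ)) ^ 2 - 1)))
    (hθ : ∀ j, 1 ≤ j → j ≤ n →
      ((1 - δ) / (1 + δ)) * v j ≤ θ j ∧ θ j ≤ ((1 + δ) / (1 - δ)) * v j) :
    ∀ i, 1 ≤ i → i ≤ n →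
      ∑ j ∈ Finset.Icc 1 n, θ j * f j
        ≥ (((1 - δ) ^ 2 + 4 * δ / (n : ℝ)) / (1 + δ) ^ 2) * θ i := by
  intro i h1i hin
  have hf : ∀ j ∈ Icc 1 n, 0 ≤ f j := fun j hj ↦ hfnn j (mem_Icc.1 hj).1 (mem_Icc.1 hj).2
  have hi : i ∈ Icc 1 n := mem_Icc.2 ⟨h1i, hin⟩
  have hn : (n : ℝ) ≠ 0 := Nat.cast_ne_zero.2 (by omega)
  have hr : 0 < (1 - δ) / (1 + δ) := div_pos (by linarith [hδ.2]) (by linarith [hδ.1])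
  have hD : 0 ≤ ((1 + δ) / (1 - δ)) ^ 2 - 1 := by
    nlinarith [one_le_div_one_sub hδ]
  have hS : f i * v i ≤ ∑ j ∈ Icc 1 n, f j * v j :=
    single_le_sum (f := fun j ↦ f j * v j)
      (fun j hj ↦ mul_nonneg (hf j hj) (hvnn j (mem_Icc.1 hj).1 (mem_Icc.1 hj).2)) hi
  have hθ_upper := mul_le_mul_of_nonneg_left (hθ i h1i hin).2 hr.le
  rw [div_mul_div_mul hδ] at hθ_upper
  refine le_of_good_of_ratio_bounds hr hD (div_sq_mul_one_add hδ) hS ?_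
    (hθ i h1i hin).1 hθ_upper
    (mul_sum_sub_add_le_sum hi hf (fun j hj ↦ (hθ j (mem_Icc.1 hj).1 (mem_Icc.1 hj).2).1))
  rw [welfare_ratio_mul_one_add hδ hn, ← mul_assoc]
  exact hgood i h1i hin

theorem stmt9 (δ : ℝ) (hδ : δ ∈ Set.Ioo (0:ℝ) 1) (n : ℕ) (hn : 1 ≤ n)
    (v θ f : ℕ → ℝ)
    (hvnn : ∀ j, 1 ≤ j → j ≤ n → 0 ≤ v j)
    (hfnn : ∀ j, 1 ≤ j → j ≤ n → 0 ≤ f j)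
    (hfsum : ∑ j ∈ Finset.Icc 1 n, f j ≤ 1)
    (hgood : ∀ i, 1 ≤ i → i ≤ n →
      (∑ j ∈ Finset.Icc 1 n, f j * v j)
        + (((1 + δ) / (1 - δ)) ^ 2 - 1) * f i * v i
      ≥ (v i / (n : ℝ)) * ((n : ℝ) + (((1 + δ) / (1 - δ)) ^ 2 - 1)))
    (hθ : ∀ j, 1 ≤ j → j ≤ n →
      ((1 - δ) / (1 + δ)) * v j ≤ θ j ∧ θ j ≤ ((1 + δ) / (1 - δ)) * v j) :
    ∀ i, 1 ≤ i → i ≤ n →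
      ∑ j ∈ Finset.Icc 1 n, θ j * f j
        ≥ (((1 - δ) ^ 2 + 4 * δ / (n : ℝ)) / (1 + δ) ^ 2) * θ i :=
  stmt9_general δ hδ n v θ f hvnn hfnn hgood hθ
end

section
/- Let δ ∈ (0,1) and x_1, x_2 > 0 be reals. If (1−δ)x_1 − 1 ≤ (1+δ)x_2 + 1, θ_1 ≤ (1+δ)x_1, and θ_2 ≥ (1−δ)x_2, then θ_2 ≥ ((1−δ)/(1+δ))²·θ_1 − 2(1−δ)/(1+δ). -/
theorem stmt10 (δ x1 x2 θ1 θ2 : ℝ) (hδ : δ ∈ Set.Ioo (0:ℝ) 1)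
    (hx1 : 0 < x1) (hx2 : 0 < x2)
    (h : (1 - δ) * x1 - 1 ≤ (1 + δ) * x2 + 1)
    (h1 : θ1 ≤ (1 + δ) * x1) (h2 : θ2 ≥ (1 - δ) * x2) :
    θ2 ≥ ((1 - δ) / (1 + δ)) ^ 2 * θ1 - 2 * (1 - δ) / (1 + δ) := by
  obtain ⟨hδ0, hδ1⟩ := hδ
  have hp : (0:ℝ) < 1 + δ := by linarith
  rw [ge_iff_le, div_pow, div_mul_eq_mul_div, div_sub_div _ _ (by positivity) hp.ne',
    div_le_iff₀ (by positivity)]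
  nlinarith [sq_nonneg (1-δ), sq_nonneg (1+δ), mul_pos hp hp,
    mul_le_mul_of_nonneg_left h1 (sq_nonneg (1-δ)),
    mul_le_mul_of_nonneg_left h (mul_nonneg (by linarith : (0:ℝ) ≤ 1-δ) hp.le),
    mul_le_mul_of_nonneg_left h2 (mul_pos (mul_pos hp hp) hp).le]
end

section
/- Let δ ∈ (0,1), B ≥ 5/δ an integer, x real with ⌊(1+δ)x⌋ = B, and y = ⌊((1−δ)x+2)/(1+δ)⌋. Then ⌈(1−δ)y⌉ ≤ ((1−δ)/(1+δ))²·⌊(1+δ)x⌋ + 4. -/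
theorem stmt13 (δ : ℝ) (hδ : δ ∈ Set.Ioo (0:ℝ) 1) (B : ℤ) (hB : (B : ℝ) ≥ 5 / δ)
    (x : ℝ) (hx : ⌊(1 + δ) * x⌋ = B) :
    let y : ℤ := ⌊((1 - δ) * x + 2) / (1 + δ)⌋
    (⌈(1 - δ) * (y : ℝ)⌉ : ℝ)
      ≤ ((1 - δ) / (1 + δ)) ^ 2 * ((⌊(1 + δ) * x⌋ : ℤ) : ℝ) + 4 := by
  intro y
  obtain ⟨hδ0, hδ1⟩ := hδ
  have hpos : (0:ℝ) < 1 + δ := by linarith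
  have hy : (y : ℝ) ≤ ((1 - δ) * x + 2) / (1 + δ) := Int.floor_le _
  have hy' : (y : ℝ) * (1 + δ) ≤ (1 - δ) * x + 2 := (le_div_iff₀ hpos).mp hy
  have hc : (⌈(1 - δ) * (y : ℝ)⌉ : ℝ) < (1 - δ) * (y : ℝ) + 1 := Int.ceil_lt_add_one _
  have hf : ((⌊(1 + δ) * x⌋ : ℤ) : ℝ) > (1 + δ) * x - 1 := Int.sub_one_lt_floor _
  rw [div_pow, div_mul_eq_mul_div, ← sub_le_iff_le_add,
    le_div_iff₀ (by positivity : (0:ℝ) < (1 + δ) ^ 2)]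
  nlinarith [mul_le_mul_of_nonneg_left hy' (show (0:ℝ) ≤ (1 - δ) * (1 + δ) from mul_nonneg (by linarith) (by linarith)),
    mul_lt_mul_of_pos_right hc (by positivity : (0:ℝ) < (1 + δ) ^ 2),
    mul_lt_mul_of_pos_left hf (show (0:ℝ) < (1 - δ) ^ 2 by nlinarith)]
end

section
/- Let n ≥ 1, δ ∈ (0,1), B ≥ 5/δ an integer, x real with ⌊(1+δ)x⌋ = B, and y = ⌊((1−δ)x+2)/(1+δ)⌋. Then for any ε with 0 < ε ≤ 1: (1/n + ε)·⌊(1+δ)x⌋ + (1 − 1/n − ε)·⌈(1−δ)y⌉ ≤ (1/n + ((n−1)/n)·((1−δ)/(1+δ))² + ε + 4/B)·⌊(1+δ)x⌋. -/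
/-!
Write `r = (1 - δ) / (1 + δ)`. Rounding loses at most one unit in each of the three roundings, so
`⌈(1 - δ) y⌉ < r² B + (1 + r)² ≤ r² B + 4`. The left-hand side is then a mixture of `B` and a
quantity at most `r² B + 4`, which gives the bound with the error term `4 = (4 / B) · B`.
-/

lemma ceil_mul_floor_lt_sq_mul_floor_add_four {δ : ℝ} (hδ0 : 0 ≤ δ) (hδ1 : δ ≤ 1) (x : ℝ) :
    ((⌈(1 - δ) * (⌊((1 - δ) * x + 2) / (1 + δ)⌋ : ℝ)⌉ : ℤ) : ℝ)
      < ((1 - δ) / (1 + δ)) ^ 2 * (⌊(1 + δ) * x⌋ : ℝ) + 4 := by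
  set r := (1 - δ) / (1 + δ)
  have hpos : 0 < 1 + δ := by linarith
  have hr0 : 0 ≤ r := div_nonneg (by linarith) hpos.le
  have hr1 : r ≤ 1 := (div_le_one hpos).2 (by linarith)
  have hx : (1 - δ) * x ≤ r * ((⌊(1 + δ) * x⌋ : ℝ) + 1) := by
    have := (Int.lt_floor_add_one ((1 + δ) * x)).le
    rw [div_mul_eq_mul_div, le_div_iff₀ hpos]
    nlinarith
  have hy : (1 - δ) * (⌊((1 - δ) * x + 2) / (1 + δ)⌋ : ℝ) ≤ r * ((1 - δ) * x + 2) := by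
    rw [div_mul_eq_mul_div, mul_div_assoc]
    exact mul_le_mul_of_nonneg_left (Int.floor_le _) (by linarith)
  calc ((⌈(1 - δ) * (⌊((1 - δ) * x + 2) / (1 + δ)⌋ : ℝ)⌉ : ℤ) : ℝ)
      < r * (r * ((⌊(1 + δ) * x⌋ : ℝ) + 1) + 2) + 1 := by
        have := mul_le_mul_of_nonneg_left hx hr0
        linarith [Int.ceil_lt_add_one ((1 - δ) * (⌊((1 - δ) * x + 2) / (1 + δ)⌋ : ℝ))]
    _ = r ^ 2 * (⌊(1 + δ) * x⌋ : ℝ) + (1 + r) ^ 2 := by ring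
    _ ≤ r ^ 2 * (⌊(1 + δ) * x⌋ : ℝ) + 4 := by nlinarith

lemma ceil_mul_floor_nonneg {δ x : ℝ} (hδ0 : 0 ≤ δ) (hδ1 : δ ≤ 1) (hx : 0 ≤ x) :
    0 ≤ ⌈(1 - δ) * (⌊((1 - δ) * x + 2) / (1 + δ)⌋ : ℝ)⌉ := by
  have hy : 0 ≤ ⌊((1 - δ) * x + 2) / (1 + δ)⌋ :=
    Int.floor_nonneg.2 (div_nonneg (by nlinarith) (by linarith))
  exact Int.ceil_nonneg (mul_nonneg (by linarith) (by exact_mod_cast hy))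

lemma mix_le_of_le_mul_add {p ε s B C : ℝ} (hp0 : 0 ≤ p) (hp1 : p ≤ 1) (hε : 0 ≤ ε)
    (hs : 0 ≤ s) (hB : 0 < B) (hC0 : 0 ≤ C) (hC : C ≤ s * B + 4) :
    (p + ε) * B + (1 - p - ε) * C ≤ (p + (1 - p) * s + ε + 4 / B) * B := by
  have hsB : 0 ≤ s * B := mul_nonneg hs hB.le
  have hmix : (1 - p - ε) * C ≤ (1 - p) * (s * B) + 4 := by
    rcases le_or_gt 0 (1 - p - ε) with h | h
    · nlinarith [mul_le_mul_of_nonneg_left hC h]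
    · nlinarith [mul_nonpos_of_nonpos_of_nonneg h.le hC0]
  calc (p + ε) * B + (1 - p - ε) * C ≤ (p + ε) * B + (1 - p) * (s * B) + 4 := by linarith
    _ = (p + (1 - p) * s + ε + 4 / B) * B := by field_simp; ring

theorem stmt14_general (n : ℕ) (hn : 1 ≤ n) (δ : ℝ) (hδ : δ ∈ Set.Ioo (0:ℝ) 1)
    (B : ℤ) (hB : (B : ℝ) ≥ 5 / δ)
    (x : ℝ) (hx : ⌊(1 + δ) * x⌋ = B)
    (ε : ℝ) (hε : 0 < ε) :
    let y : ℤ := ⌊((1 - δ) * x + 2) / (1 + δ)⌋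
    (1 / (n : ℝ) + ε) * ((⌊(1 + δ) * x⌋ : ℤ) : ℝ)
      + (1 - 1 / (n : ℝ) - ε) * ((⌈(1 - δ) * (y : ℝ)⌉ : ℤ) : ℝ)
    ≤ (1 / (n : ℝ) + (((n : ℝ) - 1) / (n : ℝ)) * ((1 - δ) / (1 + δ)) ^ 2 + ε + 4 / (B : ℝ))
        * ((⌊(1 + δ) * x⌋ : ℤ) : ℝ) := by
  intro y
  obtain ⟨hδ0, hδ1⟩ := hδ
  have hn0 : (0 : ℝ) < n := by exact_mod_cast hn
  have hB0 : (0 : ℝ) < B := lt_of_lt_of_le (div_pos (by norm_num) hδ0) hB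
  have hx0 : 0 ≤ x := by
    have := Int.floor_le ((1 + δ) * x)
    rw [hx] at this
    nlinarith
  have hC := ceil_mul_floor_lt_sq_mul_floor_add_four hδ0.le hδ1.le x
  have hC0 := ceil_mul_floor_nonneg hδ0.le hδ1.le hx0
  rw [hx] at hC ⊢
  rw [show ((n : ℝ) - 1) / n = 1 - 1 / n by field_simp]
  exact mix_le_of_le_mul_add (by positivity) ((div_le_one hn0).2 (by exact_mod_cast hn)) hε.le
    (sq_nonneg _) hB0 (by exact_mod_cast hC0) hC.le

theorem stmt14 (n : ℕ) (hn : 1 ≤ n) (δ : ℝ) (hδ : δ ∈ Set.Ioo (0:ℝ) 1)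
    (B : ℤ) (hB : (B : ℝ) ≥ 5 / δ)
    (x : ℝ) (hx : ⌊(1 + δ) * x⌋ = B)
    (ε : ℝ) (hε : 0 < ε) (hε1 : ε ≤ 1) :
    let y : ℤ := ⌊((1 - δ) * x + 2) / (1 + δ)⌋
    (1 / (n : ℝ) + ε) * ((⌊(1 + δ) * x⌋ : ℤ) : ℝ)
      + (1 - 1 / (n : ℝ) - ε) * ((⌈(1 - δ) * (y : ℝ)⌉ : ℤ) : ℝ)
    ≤ (1 / (n : ℝ) + (((n : ℝ) - 1) / (n : ℝ)) * ((1 - δ) / (1 + δ)) ^ 2 + ε + 4 / (B : ℝ))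
        * ((⌊(1 + δ) * x⌋ : ℤ) : ℝ) :=
  stmt14_general n hn δ hδ B hB x hx ε hε
end

section
/- Let δ ∈ (0,1), D = ((1+δ)/(1−δ))²−1, n ≥ 2. Fix v > 0 and consider bids z ∈ (v, (1+D)v] by player i while all other n−1 players bid v. With all n players candidate winners, the allocation probability of player i is g(z) = (1/(nD))·(D + n − 1 − (v/z)(n−1)), which satisfies g(z) > 1/n for all z ∈ (v,(1+D)v] and g is strictly increasing on this interval; in particular ∫_v^{w} (g(z) − 1/n) dz > 0 for every w ∈ (v, (1+D)v]. -/
theorem stmt18 (δ : ℝ) (hδ : δ ∈ Set.Ioo (0:ℝ) 1) (n : ℕ) (hn : 2 ≤ n)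
    (v : ℝ) (hv : 0 < v) :
    let D : ℝ := ((1 + δ) / (1 - δ)) ^ 2 - 1
    let g : ℝ → ℝ := fun z => (1 / ((n : ℝ) * D)) * (D + (n : ℝ) - 1 - (v / z) * ((n : ℝ) - 1))
    (∀ z ∈ Set.Ioc v ((1 + D) * v), g z > 1 / (n : ℝ)) ∧
    StrictMonoOn g (Set.Ioc v ((1 + D) * v)) ∧
    (∀ w ∈ Set.Ioc v ((1 + D) * v), 0 < ∫ z in v..w, (g z - 1 / (n : ℝ))) := by
  obtain ⟨hδ0, hδ1⟩ := hδ
  intro D g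
  have h1δ : (0:ℝ) < 1 - δ := by linarith
  have hratio : (1:ℝ) < (1 + δ) / (1 - δ) := by
    rw [lt_div_iff₀ h1δ]; linarith
  have hD : 0 < D := by
    have := one_lt_pow₀ hratio (two_ne_zero)
    simp only [D]; linarith
  clear_value D
  have hn1 : (1:ℝ) ≤ (n:ℝ) - 1 := by
    have : (2:ℝ) ≤ (n:ℝ) := by exact_mod_cast hn
    linarith
  have hnpos : (0:ℝ) < (n:ℝ) := by linarith
  have hnD : (0:ℝ) < (n:ℝ) * D := mul_pos hnpos hD
  have key : ∀ z ∈ Set.Ioc v ((1 + D) * v), g z > 1 / (n : ℝ) := by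
    intro z ⟨hz1, _⟩
    have hzpos : 0 < z := lt_trans hv hz1
    have hvz : v / z < 1 := (div_lt_one hzpos).mpr hz1
    show (1 / ((n : ℝ) * D)) * (D + (n : ℝ) - 1 - (v / z) * ((n : ℝ) - 1)) > 1 / (n:ℝ)
    have hgz : (1 / ((n : ℝ) * D)) * (D + (n : ℝ) - 1 - (v / z) * ((n : ℝ) - 1)) - 1/(n:ℝ)
        = (1/((n:ℝ)*D)) * (((n:ℝ)-1)*(1 - v/z)) := by
      field_simp
      ring
    have hpos : 0 < (1/((n:ℝ)*D)) * (((n:ℝ)-1)*(1 - v/z)) := by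
      apply mul_pos (by positivity)
      exact mul_pos (by linarith) (by linarith)
    linarith [hgz, hpos]
  have mono : StrictMonoOn g (Set.Ioc v ((1 + D) * v)) := by
    intro z1 ⟨h1, _⟩ z2 ⟨h2, _⟩ h12
    have hz1 : 0 < z1 := lt_trans hv h1
    have hz2 : 0 < z2 := lt_trans hv h2
    have hdiv : v / z2 < v / z1 := div_lt_div_of_pos_left hv hz1 h12
    show (1 / ((n : ℝ) * D)) * (D + (n : ℝ) - 1 - (v / z1) * ((n : ℝ) - 1))
        < (1 / ((n : ℝ) * D)) * (D + (n : ℝ) - 1 - (v / z2) * ((n : ℝ) - 1))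
    have hc : 0 < 1 / ((n:ℝ) * D) := by positivity
    apply mul_lt_mul_of_pos_left _ hc
    nlinarith
  refine ⟨key, mono, ?_⟩
  intro w ⟨hw1, hw2⟩
  have hwpos : 0 < w := lt_trans hv hw1
  have hcont : ContinuousOn (fun z => g z - 1 / (n:ℝ)) (Set.uIcc v w) := by
    have hsub : Set.uIcc v w ⊆ {z : ℝ | z ≠ 0} := by
      rw [Set.uIcc_of_le (le_of_lt hw1)]
      intro x ⟨hx1, _⟩
      exact ne_of_gt (lt_of_lt_of_le hv hx1)
    apply ContinuousOn.sub _ continuousOn_const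
    apply ContinuousOn.mul continuousOn_const
    apply ContinuousOn.sub
    · exact continuousOn_const
    · exact ((continuousOn_const.div continuousOn_id (fun x hx => hsub hx)).mul
        continuousOn_const)
  apply intervalIntegral.intervalIntegral_pos_of_pos_on
  · exact hcont.intervalIntegrable
  · intro x ⟨hx1, hx2⟩
    have hx : x ∈ Set.Ioc v ((1 + D) * v) := ⟨hx1, le_trans (le_of_lt hx2) hw2⟩
    have := key x hx
    linarith [this]
  · exact hw1
end
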